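/- Let n be even, Γ = (Γ₁,…,Γₙ) ∈ (S²)ⁿ with cyclic indices, W(Γ) = min_i arccos(Γᵢᵀ Γᵢ₊₁), and M_e the antipodal formation manifold {Γ : ∃ v ∈ S², Γᵢ = (−1)^{i−1} v}. Then d_{M_e}(Γ) ≤ (n/2)(π − W(Γ)), where d_{M_e}(Γ) = inf_{Γ̄ ∈ M_e} max_i arccos(Γᵢᵀ Γ̄ᵢ). -/

import Mathlib

/-!
Take `n = 2m`, `W = minⱼ d(Γⱼ, Γⱼ₊₁)` and the candidate `v = (-1)^m Γₘ`.
A single step along the chain costs at most `π - W`, since `d(Γⱼ, -Γⱼ₊₁) = π - d(Γⱼ, Γⱼ₊₁)`;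
so by the spherical triangle inequality
`d(Γᵢ, (-1)^(i+m) Γₘ) ≤ |i - m| (π - W) ≤ m (π - W)` for every `i < n`.
-/

open Matrix Real

noncomputable section

/-- The hat (cross-product) matrix of `k`, satisfying `hat k *ᵥ y = k ×₃ y`. -/
def hat (k : Fin 3 → ℝ) : Matrix (Fin 3) (Fin 3) ℝ :=
  !![0, -k 2, k 1; k 2, 0, -k 0; -k 1, k 0, 0]

/-- Membership in the unit 2-sphere. -/
def S2 (x : Fin 3 → ℝ) : Prop := x ⬝ᵥ x = 1

/-- Geodesic distance on the unit sphere. -/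
def geo (x y : Fin 3 → ℝ) : ℝ := Real.arccos (x ⬝ᵥ y)

open InnerProductGeometry

lemma geo_comm (x y : Fin 3 → ℝ) : geo x y = geo y x := by
  rw [geo, geo, dotProduct_comm]

lemma geo_smul_swap (c : ℝ) (x y : Fin 3 → ℝ) : geo x (c • y) = geo (c • x) y := by
  rw [geo, geo, dotProduct_smul, smul_dotProduct]

lemma geo_nonneg (x y : Fin 3 → ℝ) : 0 ≤ geo x y := arccos_nonneg _

lemma geo_le_pi (x y : Fin 3 → ℝ) : geo x y ≤ π := arccos_le_pi _

lemma geo_neg_right (x y : Fin 3 → ℝ) : geo x (-y) = π - geo x y := by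
  rw [geo, geo, dotProduct_neg, arccos_neg]

lemma norm_toLp_of_S2 {x : Fin 3 → ℝ} (hx : S2 x) : ‖WithLp.toLp 2 x‖ = 1 := by
  rw [norm_eq_sqrt_real_inner, EuclideanSpace.inner_toLp_toLp, star_trivial, hx, sqrt_one]

lemma geo_eq_angle {x y : Fin 3 → ℝ} (hx : S2 x) (hy : S2 y) :
    geo x y = angle (WithLp.toLp 2 x) (WithLp.toLp 2 y) := by
  rw [angle, norm_toLp_of_S2 hx, norm_toLp_of_S2 hy, EuclideanSpace.inner_toLp_toLp,
    star_trivial, dotProduct_comm, mul_one, div_one, geo]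

lemma geo_triangle {x y z : Fin 3 → ℝ} (hx : S2 x) (hy : S2 y) (hz : S2 z) :
    geo x z ≤ geo x y + geo y z := by
  rw [geo_eq_angle hx hy, geo_eq_angle hy hz, geo_eq_angle hx hz]
  exact angle_le_angle_add_angle _ _ _

lemma S2.neg_one_pow_smul {x : Fin 3 → ℝ} (hx : S2 x) (k : ℕ) : S2 (((-1 : ℝ) ^ k) • x) := by
  rw [S2, smul_dotProduct, dotProduct_smul, hx, smul_eq_mul, smul_eq_mul, mul_one, ← pow_add,
    ← two_mul, pow_mul, neg_one_sq, one_pow]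

lemma geo_neg_one_pow_smul_smul (k : ℕ) (x y : Fin 3 → ℝ) :
    geo (((-1 : ℝ) ^ k) • x) (((-1 : ℝ) ^ k) • y) = geo x y := by
  rw [geo_smul_swap, smul_smul, ← mul_pow, neg_one_mul, neg_neg, one_pow, one_smul]

lemma geo_neg_one_pow_smul_le_of_chain {Γ : ℕ → Fin 3 → ℝ} (hS : ∀ i, S2 (Γ i)) {W : ℝ}
    (i k : ℕ) (hW : ∀ j, i ≤ j → j < i + k → W ≤ geo (Γ j) (Γ (j + 1))) :
    geo (Γ i) (((-1 : ℝ) ^ k) • Γ (i + k)) ≤ k * (π - W) := by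
  induction k with
  | zero =>
    have hi := hS i
    rw [S2] at hi
    simp [geo, hi]
  | succ k ih =>
    have hstep :
        geo (((-1 : ℝ) ^ k) • Γ (i + k)) (((-1 : ℝ) ^ (k + 1)) • Γ (i + k + 1)) ≤ π - W := by
      rw [pow_succ, mul_neg_one, neg_smul, ← smul_neg, geo_neg_one_pow_smul_smul, geo_neg_right]
      linarith [hW (i + k) (by omega) (by omega)]
    calc geo (Γ i) (((-1 : ℝ) ^ (k + 1)) • Γ (i + (k + 1)))
        ≤ geo (Γ i) (((-1 : ℝ) ^ k) • Γ (i + k))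
          + geo (((-1 : ℝ) ^ k) • Γ (i + k)) (((-1 : ℝ) ^ (k + 1)) • Γ (i + k + 1)) :=
          geo_triangle (hS i) ((hS _).neg_one_pow_smul k) ((hS _).neg_one_pow_smul (k + 1))
      _ ≤ k * (π - W) + (π - W) := add_le_add (ih fun j hij hj => hW j hij (by omega)) hstep
      _ = (k + 1 : ℕ) * (π - W) := by push_cast; ring

lemma geo_neg_one_pow_smul_le {Γ : ℕ → Fin 3 → ℝ} (hS : ∀ i, S2 (Γ i)) {W : ℝ} {m i : ℕ}
    (hW : ∀ j < m + m, W ≤ geo (Γ j) (Γ (j + 1))) (hi : i < m + m) :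
    geo (Γ i) (((-1 : ℝ) ^ (i + m)) • Γ m) ≤ m * (π - W) := by
  have hWπ : 0 ≤ π - W := by linarith [hW 0 (by omega), geo_le_pi (Γ 0) (Γ (0 + 1))]
  rcases le_total i m with him | hmi
  · obtain ⟨k, rfl⟩ := Nat.exists_eq_add_of_le him
    have hsign : (-1 : ℝ) ^ (i + (i + k)) = (-1) ^ k := by
      rw [← add_assoc, ← two_mul, pow_add, pow_mul, neg_one_sq, one_pow, one_mul]
    rw [hsign]
    calc geo (Γ i) (((-1 : ℝ) ^ k) • Γ (i + k)) ≤ k * (π - W) :=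
          geo_neg_one_pow_smul_le_of_chain hS i k fun j _ hj => hW j (by omega)
      _ ≤ (i + k : ℕ) * (π - W) := by gcongr; omega
  · obtain ⟨k, rfl⟩ := Nat.exists_eq_add_of_le hmi
    have hsign : (-1 : ℝ) ^ (m + k + m) = (-1) ^ k := by
      rw [add_right_comm, ← two_mul, pow_add, pow_mul, neg_one_sq, one_pow, one_mul]
    rw [hsign, geo_smul_swap, geo_comm]
    calc geo (Γ m) (((-1 : ℝ) ^ k) • Γ (m + k)) ≤ k * (π - W) :=
          geo_neg_one_pow_smul_le_of_chain hS m k fun j _ hj => hW j (by omega)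
      _ ≤ m * (π - W) := by gcongr; omega

theorem stmt_9 (n : ℕ) (hn : 0 < n) (hne : Even n) (Γ : ℕ → Fin 3 → ℝ)
    (hS : ∀ i, S2 (Γ i)) :
    sInf {d : ℝ | ∃ v : Fin 3 → ℝ, S2 v ∧
        d = (Finset.range n).sup' (Finset.nonempty_range_iff.mpr (by omega))
          (fun i => geo (Γ i) (((-1 : ℝ) ^ i) • v))} ≤
      ((n : ℝ) / 2) *
        (π - (Finset.range n).inf' (Finset.nonempty_range_iff.mpr (by omega))
          (fun i => geo (Γ i) (Γ (i + 1)))) := by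
  obtain ⟨m, rfl⟩ := hne
  have hhalf : ((m + m : ℕ) : ℝ) / 2 = m := by push_cast; ring
  rw [hhalf]
  refine csInf_le_of_le ?_ ⟨((-1 : ℝ) ^ m) • Γ m, (hS m).neg_one_pow_smul m, rfl⟩ ?_
  · refine ⟨0, ?_⟩
    rintro d ⟨w, -, rfl⟩
    exact (geo_nonneg _ _).trans
      (Finset.le_sup' (fun i => geo (Γ i) (((-1 : ℝ) ^ i) • w)) (Finset.mem_range.mpr hn))
  · refine Finset.sup'_le _ _ fun i hi => ?_
    rw [smul_smul, ← pow_add]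
    exact geo_neg_one_pow_smul_le hS (fun j hj => Finset.inf'_le _ (Finset.mem_range.mpr hj))
      (Finset.mem_range.mp hi)
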